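/- Fix β ∈ ℝ. The R-operator with respect to Ω_β of r_i = r(1,0,0,0) satisfies the graded classical Yang–Baxter equation with ω = 0; the R-operators of r_ii = r(0,0,1,1), r_iii = r(0,0,−1,−1) and r_v = r(0,1,0,0) satisfy the modified graded classical Yang–Baxter equation with ω = 1; and, for p ≠ 0, the R-operator of r_iv(p) = r(1,0,p,p) satisfies it with ω = p². Moreover, for none of r_ii, r_iii, r_iv(p) (p ≠ 0) and r_v does the R-operator satisfy the equation with ω = 0. -/
import Mathlib


noncomputable section

/-- The underlying supervector space `V = ℝ⁴`, with basis `T 0, T 1` even and `T 2, T 3` odd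
(corresponding to `T₁, T₂; T₃, T₄`). -/
abbrev V4 : Type := Fin 4 → ℝ

/-- The basis vectors `T₁, T₂, T₃, T₄` (zero-indexed). -/
def T (i : Fin 4) : V4 := Pi.single i 1

/-- The bilinear bracket of the Lie superalgebra `(C⁵₀+A)`, determined by
`[T₁,T₃] = −T₄`, `[T₃,T₁] = T₄`, `[T₁,T₄] = T₃`, `[T₄,T₁] = −T₃`,
`[T₃,T₃] = T₂`, `[T₄,T₄] = T₂`, all other brackets of basis vectors zero. -/
def brC5 (x y : V4) : V4 :=
  ![0, x 2 * y 2 + x 3 * y 3, x 0 * y 3 - x 3 * y 0, -(x 0 * y 2) + x 2 * y 0]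

/-- The R-operator of the r-matrix `r(m₁,m₂,m₃,m₄)` with respect to `Ω_β`:
`R(T₁) = m₁T₁ − βm₁T₂`, `R(T₂) = −m₁T₂`, `R(T₃) = m₂T₃ + m₄T₄`, `R(T₄) = −m₃T₃ − m₂T₄`. -/
def Rop (β m₁ m₂ m₃ m₄ : ℝ) : V4 →ₗ[ℝ] V4 :=
  Matrix.toLin' !![m₁, 0, 0, 0; -(β*m₁), -m₁, 0, 0; 0, 0, m₂, -m₃; 0, 0, m₄, -m₂]

/-- `R` satisfies the (modified) graded classical Yang–Baxter equation with parameter `ω`: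
`[R(x),R(y)] − R([R(x),y] + [x,R(y)]) = ω[x,y]` for all `x, y ∈ V`. -/
def SatGCYBE (R : V4 →ₗ[ℝ] V4) (ω : ℝ) : Prop :=
  ∀ x y : V4, brC5 (R x) (R y) - R (brC5 (R x) y + brC5 x (R y)) = ω • brC5 x y

lemma Rop_apply (β m₁ m₂ m₃ m₄ : ℝ) (x : V4) :
    Rop β m₁ m₂ m₃ m₄ x =
      ![m₁ * x 0, -(β*m₁) * x 0 - m₁ * x 1, m₂ * x 2 - m₃ * x 3, m₄ * x 2 - m₂ * x 3] := by
  funext i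
  fin_cases i <;>
    simp [Rop, Matrix.toLin'_apply, Matrix.mulVec, dotProduct, Fin.sum_univ_four] <;>
    ring

/-- Fix `β ∈ ℝ`. The R-operator of `r_i = r(1,0,0,0)` satisfies the graded classical
Yang–Baxter equation with `ω = 0`; the R-operators of `r_ii = r(0,0,1,1)`,
`r_iii = r(0,0,−1,−1)` and `r_v = r(0,1,0,0)` satisfy the modified equation with `ω = 1`;
and for `p ≠ 0` the R-operator of `r_iv(p) = r(1,0,p,p)` satisfies it with `ω = p²`.
Moreover, none of `r_ii, r_iii, r_iv(p)` (`p ≠ 0`) and `r_v` has an R-operator satisfying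
the equation with `ω = 0`. -/
theorem representatives_satisfy_gcybe (β : ℝ) :
    SatGCYBE (Rop β 1 0 0 0) 0 ∧
    SatGCYBE (Rop β 0 0 1 1) 1 ∧
    SatGCYBE (Rop β 0 0 (-1) (-1)) 1 ∧
    SatGCYBE (Rop β 0 1 0 0) 1 ∧
    (∀ p : ℝ, p ≠ 0 → SatGCYBE (Rop β 1 0 p p) (p ^ 2)) ∧
    ¬ SatGCYBE (Rop β 0 0 1 1) 0 ∧
    ¬ SatGCYBE (Rop β 0 0 (-1) (-1)) 0 ∧
    (∀ p : ℝ, p ≠ 0 → ¬ SatGCYBE (Rop β 1 0 p p) 0) ∧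
    ¬ SatGCYBE (Rop β 0 1 0 0) 0 := by
  refine ⟨?_, ?_, ?_, ?_, ?_, ?_, ?_, ?_, ?_⟩
  · intro x y; funext i
    fin_cases i <;> simp [brC5, Rop_apply, Pi.add_apply] <;> ring
  · intro x y; funext i
    fin_cases i <;> simp [brC5, Rop_apply, Pi.add_apply] <;> ring
  · intro x y; funext i
    fin_cases i <;> simp [brC5, Rop_apply, Pi.add_apply] <;> ring
  · intro x y; funext i
    fin_cases i <;> simp [brC5, Rop_apply, Pi.add_apply] <;> ring
  · intro p _hp x y; funext i
    fin_cases i <;> simp [brC5, Rop_apply, Pi.add_apply] <;> ring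
  · intro h
    have h1 := congrFun (h (T 2) (T 2)) 1
    simp [T, brC5, Rop_apply, Pi.add_apply, Pi.single_apply] at h1
  · intro h
    have h1 := congrFun (h (T 2) (T 2)) 1
    simp [T, brC5, Rop_apply, Pi.add_apply, Pi.single_apply] at h1
  · intro p hp h
    have h1 := congrFun (h (T 2) (T 2)) 1
    simp [T, brC5, Rop_apply, Pi.add_apply, Pi.single_apply] at h1
    exact hp (by nlinarith [sq_nonneg p])
  · intro h
    have h1 := congrFun (h (T 2) (T 2)) 1
    simp [T, brC5, Rop_apply, Pi.add_apply, Pi.single_apply] at h1
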